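/- The counter-model M (with Mₙ = {kₙ, lₙ, 1ₙ,…,nₙ, 1̄ₙ,…,n̄ₙ} and the composition defined via the involution) is an intensional functional structure: it satisfies iₙ □_{p,n} ⟨a₁,…,aₙ⟩ = aᵢ, a □_{n,n} ⟨1ₙ,…,nₙ⟩ = a, and (a □_{p,n} ⟨b₁,…,bₙ⟩) □_{q,p} ⟨c₁,…,cₚ⟩ = a □_{q,n} ⟨b₁ □_{q,p} ⟨c₁,…,cₚ⟩, …, bₙ □_{q,p} ⟨c₁,…,cₚ⟩⟩. -/
import Mathlib

/- ## The counter-model `M` with `Mₙ = {kₙ, lₙ, 1ₙ,…,nₙ, 1̄ₙ,…,n̄ₙ}` -/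

/-- The carrier `Mₙ = {kₙ, lₙ, 1ₙ, …, nₙ, 1̄ₙ, …, n̄ₙ}` (2n+2 distinct elements):
`pr i` is the projection `(i+1)ₙ` and `bar i` is the barred element `(i+1)̄ₙ`. -/
inductive CM (n : ℕ) : Type
  | k : CM n
  | l : CM n
  | pr : Fin n → CM n
  | bar : Fin n → CM n
deriving DecidableEq

/-- The involution `−`: fixes `kₙ` and `lₙ`, swaps `iₙ` and `īₙ`. -/
def CM.neg {n : ℕ} : CM n → CM n
  | .k => .k
  | .l => .l
  | .pr i => .bar i
  | .bar i => .pr i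

/-- Composition `a □_{p,n} ⟨b₁,…,bₙ⟩`:
`kₙ □ b = kₚ`, `lₙ □ b = lₚ`, `iₙ □ b = bᵢ`, `īₙ □ b = −bᵢ`. -/
def CM.comp {n p : ℕ} : CM n → (Fin n → CM p) → CM p
  | .k, _ => .k
  | .l, _ => .l
  | .pr i, b => b i
  | .bar i, b => (b i).neg

lemma CM.neg_neg {n : ℕ} (x : CM n) : x.neg.neg = x := by
  cases x <;> rfl

lemma CM.comp_neg {n p : ℕ} (x : CM n) (c : Fin n → CM p) :
    CM.comp x.neg c = (CM.comp x c).neg := by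
  cases x <;> try rfl
  case bar i => show c i = (c i).neg.neg; exact (CM.neg_neg _).symm

/-- The counter-model `M` is an intensional functional structure: it satisfies
`iₙ □ ⟨a₁,…,aₙ⟩ = aᵢ`, `a □ ⟨1ₙ,…,nₙ⟩ = a` and
`(a □ ⟨b₁,…,bₙ⟩) □ ⟨c₁,…,cₚ⟩ = a □ ⟨b₁ □ ⟨c⟩, …, bₙ □ ⟨c⟩⟩`. -/
theorem CM_is_IFS :
    (∀ (n p : ℕ) (i : Fin n) (b : Fin n → CM p), CM.comp (CM.pr i) b = b i) ∧
    (∀ (n : ℕ) (a : CM n), CM.comp a (fun i => CM.pr i) = a) ∧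
    (∀ (n p q : ℕ) (a : CM n) (b : Fin n → CM p) (c : Fin p → CM q),
        CM.comp (CM.comp a b) c = CM.comp a (fun i => CM.comp (b i) c)) := by
  refine ⟨fun n p i b => rfl, fun n a => ?_, fun n p q a b c => ?_⟩
  · cases a <;> rfl
  · cases a <;> try rfl
    case bar i => exact CM.comp_neg (b i) c
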